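/- arXiv:2105.05473 — 2 statements merged into one kernel-verified Lean document; each statement's English description precedes it below -/
import Mathlib

section
/- Let n ≥ 1 and let p, q : Fin n → ℝ be probability vectors (nonnegative, summing to 1) with q i > 0 for all i. Then ∑ i, p i / √(q i) ≥ (∑ i, (p i)^(2/3))^(3/2), with equality when q i is proportional to (p i)^(2/3). -/
/-!
Write `p i ^ (2/3) = (p i / √(q i)) ^ (2/3) * q i ^ (1/3)`; Hölder's inequality with the
conjugate exponents `3/2` and `3` gives `∑ p ^ (2/3) ≤ (∑ p / √q) ^ (2/3) * (∑ q) ^ (1/3)`.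
Equality holds when the two factors are proportional, i.e. when `q i ∝ p i ^ (2/3)`:
then every term `p i / √(q i)` equals `p i ^ (2/3) * √(∑ p ^ (2/3))`.
-/

open Finset Real

lemma rpow_two_thirds_eq_div_sqrt_mul {a b : ℝ} (ha : 0 ≤ a) (hb : 0 < b) :
    a ^ (2 / 3 : ℝ) = (a / √b) ^ (2 / 3 : ℝ) * b ^ (1 / 3 : ℝ) := by
  rw [sqrt_eq_rpow, div_rpow ha (rpow_nonneg hb.le _), ← rpow_mul hb.le]
  norm_num
  exact (div_mul_cancel₀ _ (rpow_pos_of_pos hb _).ne').symm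

lemma sum_rpow_two_thirds_le {ι : Type*} (s : Finset ι) {p q : ι → ℝ}
    (hp : ∀ i ∈ s, 0 ≤ p i) (hq : ∀ i ∈ s, 0 < q i) :
    ∑ i ∈ s, p i ^ (2 / 3 : ℝ) ≤
      (∑ i ∈ s, p i / √(q i)) ^ (2 / 3 : ℝ) * (∑ i ∈ s, q i) ^ (1 / 3 : ℝ) := by
  have holder := inner_le_Lp_mul_Lq_of_nonneg s (f := fun i => (p i / √(q i)) ^ (2 / 3 : ℝ))
    (g := fun i => q i ^ (1 / 3 : ℝ)) (p := 3 / 2) (q := 3) ⟨by norm_num, by norm_num, by norm_num⟩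
    (fun i hi => rpow_nonneg (div_nonneg (hp i hi) (sqrt_nonneg _)) _)
    (fun i hi => rpow_nonneg (hq i hi).le _)
  have hfg : ∑ i ∈ s, (p i / √(q i)) ^ (2 / 3 : ℝ) * q i ^ (1 / 3 : ℝ) = ∑ i ∈ s, p i ^ (2 / 3 : ℝ) :=
    sum_congr rfl fun i hi => (rpow_two_thirds_eq_div_sqrt_mul (hp i hi) (hq i hi)).symm
  have hf : ∑ i ∈ s, ((p i / √(q i)) ^ (2 / 3 : ℝ)) ^ (3 / 2 : ℝ) = ∑ i ∈ s, p i / √(q i) :=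
    sum_congr rfl fun i hi => by
      rw [← rpow_mul (div_nonneg (hp i hi) (sqrt_nonneg _))]
      norm_num
  have hg : ∑ i ∈ s, (q i ^ (1 / 3 : ℝ)) ^ (3 : ℝ) = ∑ i ∈ s, q i :=
    sum_congr rfl fun i hi => by
      rw [← rpow_mul (hq i hi).le]
      norm_num
  rw [hfg, hf, hg] at holder
  norm_num at holder ⊢
  exact holder

lemma div_sqrt_rpow_two_thirds_div {a S : ℝ} (ha : 0 ≤ a) (hS : 0 < S) :
    a / √(a ^ (2 / 3 : ℝ) / S) = a ^ (2 / 3 : ℝ) * √S := by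
  rcases ha.eq_or_lt with rfl | ha
  · simp
  have split : a = a ^ (2 / 3 : ℝ) * √(a ^ (2 / 3 : ℝ)) := by
    rw [sqrt_eq_rpow, ← rpow_mul ha.le, ← rpow_add ha]
    norm_num
  have : 0 < √(a ^ (2 / 3 : ℝ)) := sqrt_pos.2 (rpow_pos_of_pos ha _)
  rw [sqrt_div' _ hS.le]
  nth_rewrite 1 [split]
  field_simp

theorem stmt_3_general (n : ℕ) (p q : Fin n → ℝ)
    (hp : ∀ i, 0 ≤ p i)
    (hq : ∀ i, 0 < q i) (hqsum : ∑ i, q i = 1) :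
    (∑ i, (p i) ^ ((2 : ℝ) / 3)) ^ ((3 : ℝ) / 2) ≤ ∑ i, p i / Real.sqrt (q i) ∧
      ((∀ i, q i = (p i) ^ ((2 : ℝ) / 3) / ∑ j, (p j) ^ ((2 : ℝ) / 3)) →
        ∑ i, p i / Real.sqrt (q i) = (∑ i, (p i) ^ ((2 : ℝ) / 3)) ^ ((3 : ℝ) / 2)) := by
  set S := ∑ i, p i ^ (2 / 3 : ℝ)
  constructor
  · have holder := sum_rpow_two_thirds_le univ (fun i _ => hp i) (fun i _ => hq i)
    rw [hqsum, one_rpow, mul_one] at holder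
    calc S ^ (3 / 2 : ℝ) ≤ ((∑ i, p i / √(q i)) ^ (2 / 3 : ℝ)) ^ (3 / 2 : ℝ) :=
          rpow_le_rpow (sum_nonneg fun i _ => rpow_nonneg (hp i) _) holder (by norm_num)
      _ = ∑ i, p i / √(q i) := by
          rw [← rpow_mul (sum_nonneg fun i _ => div_nonneg (hp i) (sqrt_nonneg _))]
          norm_num
  · intro hqe
    have hS : 0 < S := by
      refine (sum_nonneg fun i _ => rpow_nonneg (hp i) _).lt_of_ne' fun hS0 => ?_
      rw [sum_congr rfl fun i _ => hqe i, ← sum_div, hS0, zero_div] at hqsum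
      exact zero_ne_one hqsum
    calc ∑ i, p i / √(q i) = ∑ i, p i ^ (2 / 3 : ℝ) * √S :=
          sum_congr rfl fun i _ => by rw [hqe i, div_sqrt_rpow_two_thirds_div (hp i) hS]
      _ = S ^ (3 / 2 : ℝ) := by
          rw [← sum_mul, sqrt_eq_rpow, ← rpow_one_add' hS.le (by norm_num)]
          norm_num

theorem stmt_3 (n : ℕ) (hn : 1 ≤ n) (p q : Fin n → ℝ)
    (hp : ∀ i, 0 ≤ p i) (hpsum : ∑ i, p i = 1)
    (hq : ∀ i, 0 < q i) (hqsum : ∑ i, q i = 1) :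
    (∑ i, (p i) ^ ((2 : ℝ) / 3)) ^ ((3 : ℝ) / 2) ≤ ∑ i, p i / Real.sqrt (q i) ∧
      ((∀ i, q i = (p i) ^ ((2 : ℝ) / 3) / ∑ j, (p j) ^ ((2 : ℝ) / 3)) →
        ∑ i, p i / Real.sqrt (q i) = (∑ i, (p i) ^ ((2 : ℝ) / 3)) ^ ((3 : ℝ) / 2)) :=
  stmt_3_general n p q hp hq hqsum
end

section
/- Let S and A be finite nonempty types, γ ∈ [0,1), R_max ≥ 0, and suppose Q₁, Q₂ : S × A → ℝ satisfy the Bellman equations as above with |r(s,a,s')| ≤ R_max and |Q₂(s',a')| ≤ R_max/(1-γ). Suppose moreover that for every (s,a), ∑_{s'} |p₁(s'|s,a) − p₂(s'|s,a)| ≤ e for a fixed e ≥ 0. Then sup_{(s,a)} |Q₁(s,a) − Q₂(s,a)| ≤ (e·R_max·(1 + γ/(1-γ)))/(1-γ) ≤ 2·e·R_max/(1-γ)². -/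
/-!
Subtracting the two Bellman equations splits `Q₁ - Q₂` into a model-error term, in which
`p₁ - p₂` is paired with the bounded one-step target `r + γ V₂` (at most `e · R_max / (1 - γ)`),
and `γ` times a `p₁`-average of `V₁ - V₂`. Hence `M := sup |Q₁ - Q₂|` satisfies
`M ≤ e · R_max / (1 - γ) + γ M`, and solving this fixed-point inequality gives the bound.
-/

open Finset

section WeightedSums

variable {ι : Type*} [Fintype ι]

theorem abs_sum_mul_le_of_stochastic {w f : ι → ℝ} {c : ℝ} (hw0 : ∀ i, 0 ≤ w i)
    (hw1 : ∑ i, w i = 1) (hf : ∀ i, |f i| ≤ c) : |∑ i, w i * f i| ≤ c :=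
  calc |∑ i, w i * f i| ≤ ∑ i, |w i * f i| := abs_sum_le_sum_abs _ _
    _ ≤ ∑ i, w i * c := sum_le_sum fun i _ => by
        rw [abs_mul, abs_of_nonneg (hw0 i)]
        exact mul_le_mul_of_nonneg_left (hf i) (hw0 i)
    _ = c := by rw [← sum_mul, hw1, one_mul]

theorem abs_sum_sub_mul_le {p q f : ι → ℝ} {c : ℝ} (hf : ∀ i, |f i| ≤ c) :
    |∑ i, (p i - q i) * f i| ≤ (∑ i, |p i - q i|) * c :=
  calc |∑ i, (p i - q i) * f i| ≤ ∑ i, |(p i - q i) * f i| := abs_sum_le_sum_abs _ _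
    _ ≤ ∑ i, |p i - q i| * c := sum_le_sum fun i _ => by
        rw [abs_mul]
        exact mul_le_mul_of_nonneg_left (hf i) (abs_nonneg _)
    _ = (∑ i, |p i - q i|) * c := (sum_mul _ _ _).symm

theorem sum_mul_add_sub_sum_mul_add (p₁ p₂ g V₁ V₂ : ι → ℝ) (γ : ℝ) :
    ∑ i, p₁ i * (g i + γ * V₁ i) - ∑ i, p₂ i * (g i + γ * V₂ i) =
      ∑ i, (p₁ i - p₂ i) * (g i + γ * V₂ i) + γ * ∑ i, p₁ i * (V₁ i - V₂ i) := by
  rw [mul_sum, ← sum_sub_distrib, ← sum_add_distrib]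
  exact sum_congr rfl fun i _ => by ring

theorem abs_bellman_sub_le {p₁ p₂ g V₁ V₂ : ι → ℝ} {γ e B M : ℝ} (hp0 : ∀ i, 0 ≤ p₁ i)
    (hp1 : ∑ i, p₁ i = 1) (hγ : 0 ≤ γ) (hL1 : ∑ i, |p₁ i - p₂ i| ≤ e)
    (hB : ∀ i, |g i + γ * V₂ i| ≤ B) (hV : ∀ i, |V₁ i - V₂ i| ≤ M) :
    |∑ i, p₁ i * (g i + γ * V₁ i) - ∑ i, p₂ i * (g i + γ * V₂ i)| ≤ e * B + γ * M := by
  have hB0 : 0 ≤ B := by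
    obtain ⟨i⟩ : Nonempty ι := by
      by_contra h
      simp [not_nonempty_iff.mp h] at hp1
    exact (abs_nonneg _).trans (hB i)
  rw [sum_mul_add_sub_sum_mul_add]
  calc _ ≤ |∑ i, (p₁ i - p₂ i) * (g i + γ * V₂ i)| + γ * |∑ i, p₁ i * (V₁ i - V₂ i)| := by
        rw [← abs_of_nonneg hγ, ← abs_mul, abs_of_nonneg hγ]
        exact abs_add_le _ _
    _ ≤ (∑ i, |p₁ i - p₂ i|) * B + γ * M := by
        gcongr
        · exact abs_sum_sub_mul_le hB
        · exact abs_sum_mul_le_of_stochastic hp0 hp1 hV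
    _ ≤ e * B + γ * M := by gcongr

end WeightedSums

theorem le_div_one_sub_of_le_add_mul {M b γ : ℝ} (hγ : γ < 1) (h : M ≤ b + γ * M) :
    M ≤ b / (1 - γ) := by
  rw [le_div_iff₀ (by linarith)]
  linarith

theorem mul_one_add_div_one_sub_div_le {γ c : ℝ} (hγ : γ < 1) (hc : 0 ≤ c) :
    c * (1 + γ / (1 - γ)) / (1 - γ) ≤ 2 * c / (1 - γ) ^ 2 := by
  have h1γ : 1 - γ ≠ 0 := by linarith
  rw [div_le_div_iff₀ (by positivity) (by positivity)]
  field_simp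
  nlinarith [sq_nonneg (1 - γ)]

section PolicyValue

variable {S A : Type*} [Fintype A]

def policyValue (π : S → A → ℝ) (Q : S × A → ℝ) (s : S) : ℝ := ∑ a, π s a * Q (s, a)

theorem policyValue_sub (π : S → A → ℝ) (Q₁ Q₂ : S × A → ℝ) (s : S) :
    policyValue π Q₁ s - policyValue π Q₂ s = ∑ a, π s a * (Q₁ (s, a) - Q₂ (s, a)) := by
  simp only [policyValue, mul_sub, sum_sub_distrib]

theorem abs_policyValue_le {π : S → A → ℝ} {Q : S × A → ℝ} {c : ℝ} (hπ0 : ∀ s a, 0 ≤ π s a)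
    (hπ1 : ∀ s, ∑ a, π s a = 1) (hQ : ∀ sa, |Q sa| ≤ c) (s : S) :
    |policyValue π Q s| ≤ c :=
  abs_sum_mul_le_of_stochastic (hπ0 s) (hπ1 s) fun a => hQ (s, a)

theorem abs_policyValue_sub_le {π : S → A → ℝ} {Q₁ Q₂ : S × A → ℝ} {M : ℝ}
    (hπ0 : ∀ s a, 0 ≤ π s a) (hπ1 : ∀ s, ∑ a, π s a = 1) (hQ : ∀ sa, |Q₁ sa - Q₂ sa| ≤ M)
    (s : S) : |policyValue π Q₁ s - policyValue π Q₂ s| ≤ M := by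
  rw [policyValue_sub]
  exact abs_sum_mul_le_of_stochastic (hπ0 s) (hπ1 s) fun a => hQ (s, a)

end PolicyValue

theorem stmt_16_general {S A : Type*} [Fintype S] [Fintype A]
    (γ R_max e : ℝ) (hγ0 : 0 ≤ γ) (hγ1 : γ < 1) (hR : 0 ≤ R_max) (he : 0 ≤ e)
    (r : S × A × S → ℝ) (p₁ p₂ : S → A → S → ℝ) (π : S → A → ℝ)
    (hp₁0 : ∀ s a s', 0 ≤ p₁ s a s') (hp₁1 : ∀ s a, ∑ s', p₁ s a s' = 1)
    (hπ0 : ∀ s a, 0 ≤ π s a) (hπ1 : ∀ s, ∑ a, π s a = 1)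
    (Q₁ Q₂ : S × A → ℝ)
    (hQ₁ : ∀ s a, Q₁ (s, a) =
      ∑ s', p₁ s a s' * (r (s, a, s') + γ * ∑ a', π s' a' * Q₁ (s', a')))
    (hQ₂ : ∀ s a, Q₂ (s, a) =
      ∑ s', p₂ s a s' * (r (s, a, s') + γ * ∑ a', π s' a' * Q₂ (s', a')))
    (hr : ∀ s a s', |r (s, a, s')| ≤ R_max)
    (hQ₂bd : ∀ s' a', |Q₂ (s', a')| ≤ R_max / (1 - γ))
    (hL1 : ∀ s a, ∑ s', |p₁ s a s' - p₂ s a s'| ≤ e) :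
    (⨆ sa : S × A, |Q₁ sa - Q₂ sa|) ≤ e * R_max * (1 + γ / (1 - γ)) / (1 - γ) ∧
      e * R_max * (1 + γ / (1 - γ)) / (1 - γ) ≤ 2 * e * R_max / (1 - γ) ^ 2 := by
  set M := ⨆ sa : S × A, |Q₁ sa - Q₂ sa|
  have hM : ∀ sa, |Q₁ sa - Q₂ sa| ≤ M := le_ciSup (Set.finite_range _).bddAbove
  have hM0 : 0 ≤ M := Real.iSup_nonneg fun _ => abs_nonneg _
  have htarget : ∀ s a s', |r (s, a, s') + γ * policyValue π Q₂ s'| ≤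
      R_max * (1 + γ / (1 - γ)) := fun s a s' =>
    calc _ ≤ R_max + γ * (R_max / (1 - γ)) := by
          refine (abs_add_le _ _).trans (add_le_add (hr s a s') ?_)
          rw [abs_mul, abs_of_nonneg hγ0]
          gcongr
          exact abs_policyValue_le hπ0 hπ1 (fun ⟨s', a'⟩ => hQ₂bd s' a') s'
      _ = R_max * (1 + γ / (1 - γ)) := by ring
  have hcontract : M ≤ e * (R_max * (1 + γ / (1 - γ))) + γ * M :=
    Real.iSup_le (fun ⟨s, a⟩ => by
      rw [hQ₁, hQ₂]
      exact abs_bellman_sub_le (hp₁0 s a) (hp₁1 s a) hγ0 (hL1 s a) (htarget s a)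
        (abs_policyValue_sub_le hπ0 hπ1 hM))
      (by positivity)
  refine ⟨by simpa only [mul_assoc] using le_div_one_sub_of_le_add_mul hγ1 hcontract, ?_⟩
  simpa only [mul_assoc] using mul_one_add_div_one_sub_div_le hγ1 (mul_nonneg he hR)

theorem stmt_16 {S A : Type*} [Fintype S] [Fintype A] [Nonempty S] [Nonempty A]
    (γ R_max e : ℝ) (hγ0 : 0 ≤ γ) (hγ1 : γ < 1) (hR : 0 ≤ R_max) (he : 0 ≤ e)
    (r : S × A × S → ℝ) (p₁ p₂ : S → A → S → ℝ) (π : S → A → ℝ)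
    (hp₁0 : ∀ s a s', 0 ≤ p₁ s a s') (hp₁1 : ∀ s a, ∑ s', p₁ s a s' = 1)
    (hp₂0 : ∀ s a s', 0 ≤ p₂ s a s') (hp₂1 : ∀ s a, ∑ s', p₂ s a s' = 1)
    (hπ0 : ∀ s a, 0 ≤ π s a) (hπ1 : ∀ s, ∑ a, π s a = 1)
    (Q₁ Q₂ : S × A → ℝ)
    (hQ₁ : ∀ s a, Q₁ (s, a) =
      ∑ s', p₁ s a s' * (r (s, a, s') + γ * ∑ a', π s' a' * Q₁ (s', a')))
    (hQ₂ : ∀ s a, Q₂ (s, a) =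
      ∑ s', p₂ s a s' * (r (s, a, s') + γ * ∑ a', π s' a' * Q₂ (s', a')))
    (hr : ∀ s a s', |r (s, a, s')| ≤ R_max)
    (hQ₂bd : ∀ s' a', |Q₂ (s', a')| ≤ R_max / (1 - γ))
    (hL1 : ∀ s a, ∑ s', |p₁ s a s' - p₂ s a s'| ≤ e) :
    (⨆ sa : S × A, |Q₁ sa - Q₂ sa|) ≤ e * R_max * (1 + γ / (1 - γ)) / (1 - γ) ∧
      e * R_max * (1 + γ / (1 - γ)) / (1 - γ) ≤ 2 * e * R_max / (1 - γ) ^ 2 :=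
  stmt_16_general γ R_max e hγ0 hγ1 hR he r p₁ p₂ π hp₁0 hp₁1 hπ0 hπ1 Q₁ Q₂ hQ₁ hQ₂ hr hQ₂bd hL1
end
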